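/- arXiv:2402.13505 — 4 statements merged into one kernel-verified Lean document; each statement's English description precedes it below -/
import Mathlib

section
/- Let K be a nonempty finite set of classes and X a nonempty type of inputs. Let p : X → K → ℝ satisfy p x y > 0 for all x, y, and let π : K → ℝ be a probability vector with π y > 0 for all y. Let f : X → K → ℝ and suppose f fits the conditional distribution, i.e., there exists h : X → ℝ with h x > 0 and exp (f x y) = h x · p x y for all x, y. Let φ : K → ℝ with φ y > 0 for all y, and suppose that for all x and y the φ-adjusted softmax prediction equals the true posterior: φ y · exp (f x y) / ∑_{y'} φ y' · exp (f x y') = π y · p x y / ∑_{y'} π y' · p x y'. Then φ is proportional to π: φ y = (∑_{y'} φ y') · π y for all y. -/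
open Finset

theorem stmt_3 {K : Type*} [Fintype K] [Nonempty K] {X : Type*} [Nonempty X]
    (p : X → K → ℝ) (hp : ∀ x y, 0 < p x y)
    (π : K → ℝ) (hπpos : ∀ y, 0 < π y) (hπsum : ∑ y, π y = 1)
    (f : X → K → ℝ) (h : X → ℝ) (hh : ∀ x, 0 < h x)
    (hf : ∀ x y, Real.exp (f x y) = h x * p x y)
    (φ : K → ℝ) (hφ : ∀ y, 0 < φ y)
    (heq : ∀ x y, φ y * Real.exp (f x y) / (∑ y', φ y' * Real.exp (f x y')) =
      π y * p x y / (∑ y', π y' * p x y')) :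
    ∀ y, φ y = (∑ y', φ y') * π y := by
  obtain ⟨x⟩ := ‹Nonempty X›
  set Sφ := ∑ y', φ y' * p x y' with hSφ
  set Sπ := ∑ y', π y' * p x y' with hSπ
  have hSφpos : 0 < Sφ := Finset.sum_pos (fun y _ => mul_pos (hφ y) (hp x y)) ⟨Classical.arbitrary K, Finset.mem_univ _⟩
  have hSπpos : 0 < Sπ := Finset.sum_pos (fun y _ => mul_pos (hπpos y) (hp x y)) ⟨Classical.arbitrary K, Finset.mem_univ _⟩
  have hden : ∑ y', φ y' * Real.exp (f x y') = h x * Sφ := by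
    rw [hSφ, Finset.mul_sum]
    exact Finset.sum_congr rfl fun y _ => by rw [hf]; ring
  have key : ∀ y, φ y * Sπ = π y * Sφ := by
    intro y
    have := heq x y
    rw [hden, hf] at this
    have h1 : φ y * (h x * p x y) * Sπ = π y * p x y * (h x * Sφ) :=
      (div_eq_div_iff (mul_pos (hh x) hSφpos).ne' (ne_of_gt hSπpos)).mp this
    have h2 : (φ y * Sπ) * (h x * p x y) = (π y * Sφ) * (h x * p x y) := by ring_nf; linarith [h1]
    exact mul_right_cancel₀ (mul_pos (hh x) (hp x y)).ne' h2
  have hsum : (∑ y', φ y') * Sπ = Sφ := by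
    calc (∑ y', φ y') * Sπ = ∑ y', φ y' * Sπ := by rw [Finset.sum_mul]
    _ = ∑ y', π y' * Sφ := Finset.sum_congr rfl fun y _ => key y
    _ = (∑ y', π y') * Sφ := by rw [Finset.sum_mul]
    _ = Sφ := by rw [hπsum, one_mul]
  intro y
  have := key y
  have : φ y * Sπ = π y * ((∑ y', φ y') * Sπ) := by rw [hsum]; exact this
  have h3 : φ y * Sπ = ((∑ y', φ y') * π y) * Sπ := by linarith [this]
  exact mul_right_cancel₀ (ne_of_gt hSπpos) h3
end

section
/- Let K be a nonempty finite set of classes and X a nonempty type of inputs. Let p : X → K → ℝ satisfy p x y > 0 for all x, y, let π_l, π_u : K → ℝ be probability vectors with strictly positive entries, let N, M ≥ 1, and set α = N/(N+M) and π_D y = α · π_l y + (1 − α) · π_u y. Let f : X → K → ℝ fit the conditional distribution, i.e., there exists h : X → ℝ with h x > 0 and exp (f x y) = h x · p x y for all x, y. Let φ : K → ℝ with φ y > 0 for all y, and suppose the φ-adjusted softmax prediction equals the posterior of the mixture distribution for all x, y: φ y · exp (f x y) / ∑_{y'} φ y' · exp (f x y') = π_D y · p x y / ∑_{y'} π_D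 y' · p x y'. Then the normalization of φ equals π_D, i.e., φ y / ∑_{y'} φ y' = (N · π_l y + M · π_u y)/(N + M) for all y. -/
open Finset

theorem stmt_6 {K : Type*} [Fintype K] [Nonempty K] {X : Type*} [Nonempty X]
    (p : X → K → ℝ) (hp : ∀ x y, 0 < p x y)
    (πl πu : K → ℝ)
    (hπl : ∀ y, 0 < πl y) (hπlsum : ∑ y, πl y = 1)
    (hπu : ∀ y, 0 < πu y) (hπusum : ∑ y, πu y = 1)
    (N M : ℕ) (hN : 1 ≤ N) (hM : 1 ≤ M)
    (α : ℝ) (hα : α = (N : ℝ) / ((N : ℝ) + M))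
    (πD : K → ℝ) (hπD : ∀ y, πD y = α * πl y + (1 - α) * πu y)
    (f : X → K → ℝ) (h : X → ℝ) (hh : ∀ x, 0 < h x)
    (hf : ∀ x y, Real.exp (f x y) = h x * p x y)
    (φ : K → ℝ) (hφ : ∀ y, 0 < φ y)
    (heq : ∀ x y, φ y * Real.exp (f x y) / (∑ y', φ y' * Real.exp (f x y')) =
      πD y * p x y / (∑ y', πD y' * p x y')) :
    ∀ y, φ y / (∑ y', φ y') = ((N : ℝ) * πl y + (M : ℝ) * πu y) / ((N : ℝ) + M) := by
  obtain ⟨x⟩ := ‹Nonempty X›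
  have hNM : (0:ℝ) < (N:ℝ) + M := by positivity
  have hπDpos : ∀ y, 0 < πD y := by
    intro y
    have hα0 : 0 < α := by rw [hα]; positivity
    have hα1 : α < 1 := by
      rw [hα]; rw [div_lt_one hNM]
      have : (0:ℝ) < M := by positivity
      linarith
    rw [hπD]
    have := hπl y; have := hπu y
    nlinarith
  set Sφ := ∑ y', φ y' * p x y' with hSφ
  set Sπ := ∑ y', πD y' * p x y' with hSπ
  have hSφpos : 0 < Sφ := Finset.sum_pos (fun y _ => mul_pos (hφ y) (hp x y)) univ_nonempty
  have hSπpos : 0 < Sπ := Finset.sum_pos (fun y _ => mul_pos (hπDpos y) (hp x y)) univ_nonempty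
  have key : ∀ y, φ y = (Sφ / Sπ) * πD y := by
    intro y
    have h1 := heq x y
    have hsum : ∑ y', φ y' * Real.exp (f x y') = h x * Sφ := by
      rw [hSφ, Finset.mul_sum]; exact Finset.sum_congr rfl fun y' _ => by rw [hf]; ring
    rw [hsum, hf] at h1
    have hhx := hh x
    have hpxy := hp x y
    field_simp at h1
    have h2 := mul_left_cancel₀ (ne_of_gt (mul_pos hhx hpxy))
      (show (h x * p x y) * (φ y * Sπ) = (h x * p x y) * (πD y * Sφ) by rw [← hSπ] at h1; rw [h1, div_mul_cancel₀ _ hSπpos.ne']; ring)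
    field_simp
    linear_combination h2
  have hsumφ : ∑ y', φ y' = Sφ / Sπ := by
    have hsumπD : ∑ y', πD y' = 1 := by
      simp only [hπD]
      rw [Finset.sum_add_distrib, ← Finset.mul_sum, ← Finset.mul_sum, hπlsum, hπusum]
      ring
    calc ∑ y', φ y' = ∑ y', (Sφ / Sπ) * πD y' := Finset.sum_congr rfl fun y' _ => key y'
      _ = (Sφ / Sπ) * ∑ y', πD y' := by rw [Finset.mul_sum]
      _ = Sφ / Sπ := by rw [hsumπD]; ring
  intro y
  rw [key y, hsumφ]
  have hr : 0 < Sφ / Sπ := div_pos hSφpos hSπpos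
  rw [mul_comm, mul_div_assoc, div_self (ne_of_gt hr), mul_one, hπD, hα]
  field_simp
  ring
end

section
/- Let (X, 𝒜, μ) be a probability measure space and let η : X → ℝ be measurable with 0 < η x < 1 for all x; set l x = η x / (1 − η x), and assume ∫ (1 − η x) dμ(x) = 1/2. Let φ*₊, φ*₋, φ̂₊, φ̂₋ be positive reals with φ*₊ + φ*₋ = 1 and φ̂₊ + φ̂₋ = 1, and set λ = (φ̂₊ · φ*₋)/(φ̂₋ · φ*₊); assume λ ≤ 1. For t > 0 define R t = ∫_{{x : l x ≥ t}} (1 − η x) dμ + ∫_{{x : l x < t}} η x dμ. Then R λ − (⨅_{t > 0} R t) ≤ |φ̂₋ − φ*₋| / (2 · φ*₊ · φ*₋). -/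
open MeasureTheory

theorem stmt_8 {X : Type*} [MeasurableSpace X] (μ : Measure X) [IsProbabilityMeasure μ]
    (η : X → ℝ) (hηm : Measurable η) (hη : ∀ x, 0 < η x ∧ η x < 1)
    (l : X → ℝ) (hl : ∀ x, l x = η x / (1 - η x))
    (hbal : ∫ x, (1 - η x) ∂μ = 1 / 2)
    (φsp φsm φhp φhm : ℝ)
    (hφsp : 0 < φsp) (hφsm : 0 < φsm) (hφhp : 0 < φhp) (hφhm : 0 < φhm)
    (hφs : φsp + φsm = 1) (hφh : φhp + φhm = 1)
    (lam : ℝ) (hlam : lam = (φhp * φsm) / (φhm * φsp)) (hlam1 : lam ≤ 1)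
    (R : ℝ → ℝ)
    (hR : ∀ t, R t = (∫ x in {x | t ≤ l x}, (1 - η x) ∂μ) + ∫ x in {x | l x < t}, η x ∂μ) :
    R lam - (⨅ t : Set.Ioi (0 : ℝ), R t) ≤ |φhm - φsm| / (2 * φsp * φsm) := by
  have hlfun : l = fun x => η x / (1 - η x) := funext hl
  have hlmeas : Measurable l := by
    rw [hlfun]; exact hηm.div (measurable_const.sub hηm)
  have hηint : Integrable η μ := by
    apply Integrable.mono' (integrable_const (1:ℝ)) hηm.aestronglyMeasurable
    filter_upwards with x
    have h := hη x
    rw [Real.norm_eq_abs, abs_le]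
    constructor <;> linarith [h.1, h.2]
  have h1int : Integrable (fun x => 1 - η x) μ := (integrable_const 1).sub hηint
  have h12int : Integrable (fun x => 1 - 2 * η x) μ :=
    (integrable_const 1).sub (hηint.const_mul 2)
  have hSmeas : ∀ t u : ℝ, MeasurableSet {x | t ≤ l x ∧ l x < u} := fun t u =>
    (measurableSet_le measurable_const hlmeas).inter (measurableSet_lt hlmeas measurable_const)
  have key : ∀ t u : ℝ, t ≤ u →
      R t - R u = ∫ x in {x | t ≤ l x ∧ l x < u}, (1 - 2 * η x) ∂μ := by
    intro t u htu
    set S := {x | t ≤ l x ∧ l x < u} with hSdef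
    have hS := hSmeas t u
    have hdisj1 : Disjoint {x | u ≤ l x} S := by
      rw [Set.disjoint_left]; rintro x hx ⟨_, h2⟩; exact absurd hx (not_le.mpr h2)
    have hunion1 : {x | t ≤ l x} = {x | u ≤ l x} ∪ S := by
      ext x; simp only [hSdef, Set.mem_setOf_eq, Set.mem_union]
      constructor
      · intro h
        rcases le_or_gt u (l x) with h' | h'
        · exact Or.inl h'
        · exact Or.inr ⟨h, h'⟩
      · rintro (h | ⟨h, _⟩)
        exacts [htu.trans h, h]
    have hdisj2 : Disjoint {x | l x < t} S := by
      rw [Set.disjoint_left]; rintro x hx ⟨h1, _⟩; exact absurd hx (not_lt.mpr h1)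
    have hunion2 : {x | l x < u} = {x | l x < t} ∪ S := by
      ext x; simp only [hSdef, Set.mem_setOf_eq, Set.mem_union]
      constructor
      · intro h
        rcases lt_or_ge (l x) t with h' | h'
        · exact Or.inl h'
        · exact Or.inr ⟨h', h⟩
      · rintro (h | ⟨_, h⟩)
        exacts [h.trans_le htu, h]
    have e1 : ∫ x in {x | t ≤ l x}, (1 - η x) ∂μ =
        (∫ x in {x | u ≤ l x}, (1 - η x) ∂μ) + ∫ x in S, (1 - η x) ∂μ := by
      rw [hunion1, setIntegral_union hdisj1 hS h1int.integrableOn h1int.integrableOn]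
    have e2 : ∫ x in {x | l x < u}, η x ∂μ =
        (∫ x in {x | l x < t}, η x ∂μ) + ∫ x in S, η x ∂μ := by
      rw [hunion2, setIntegral_union hdisj2 hS hηint.integrableOn hηint.integrableOn]
    have e3 : ∫ x in S, (1 - 2 * η x) ∂μ =
        (∫ x in S, (1 - η x) ∂μ) - ∫ x in S, η x ∂μ := by
      rw [← integral_sub h1int.integrableOn hηint.integrableOn]
      exact integral_congr_ae (Filter.Eventually.of_forall fun x => by ring)
    rw [hR t, hR u]
    linarith [e1, e2, e3]
  have hηlt : ∀ x u, l x < u → η x < u * (1 - η x) := by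
    intro x u h
    have h1 := hη x
    rw [hl x, div_lt_iff₀ (by linarith [h1.2])] at h
    linarith [h]
  have hηge : ∀ x t, t ≤ l x → t * (1 - η x) ≤ η x := by
    intro x t h
    have h1 := hη x
    rw [hl x, le_div_iff₀ (by linarith [h1.2])] at h
    linarith [h]
  have hR1le : ∀ t : ℝ, 0 < t → R 1 ≤ R t := by
    intro t ht
    rcases le_or_gt t 1 with htu | htu
    · have hk := key t 1 htu
      have hnn : 0 ≤ ∫ x in {x | t ≤ l x ∧ l x < 1}, (1 - 2 * η x) ∂μ := by
        apply setIntegral_nonneg (hSmeas t 1)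
        intro x hx
        have := hηlt x 1 hx.2
        linarith [this]
      linarith [hk, hnn]
    · have hk := key 1 t htu.le
      have hnp : ∫ x in {x | 1 ≤ l x ∧ l x < t}, (1 - 2 * η x) ∂μ ≤ 0 := by
        apply setIntegral_nonpos (hSmeas 1 t)
        intro x hx
        have := hηge x 1 hx.1
        linarith [this]
      linarith [hk, hnp]
  haveI : Nonempty (Set.Ioi (0:ℝ)) := ⟨⟨1, by norm_num⟩⟩
  have hinf : R 1 ≤ ⨅ t : Set.Ioi (0 : ℝ), R t :=
    le_ciInf fun t => hR1le t t.2
  have hlampos : 0 < lam := by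
    rw [hlam]; positivity
  -- bound R lam - R 1
  have hk := key lam 1 hlam1
  have hmono : ∫ x in {x | lam ≤ l x ∧ l x < 1}, (1 - 2 * η x) ∂μ ≤
      ∫ x in {x | lam ≤ l x ∧ l x < 1}, (1 - lam) * (1 - η x) ∂μ := by
    apply setIntegral_mono_on h12int.integrableOn (h1int.const_mul (1 - lam)).integrableOn
      (hSmeas lam 1)
    intro x hx
    have h1 := hη x
    have h2 := hηge x lam hx.1
    nlinarith [h1.1, h1.2]
  have hconst : ∫ x in {x | lam ≤ l x ∧ l x < 1}, (1 - lam) * (1 - η x) ∂μ =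
      (1 - lam) * ∫ x in {x | lam ≤ l x ∧ l x < 1}, (1 - η x) ∂μ := by
    exact integral_const_mul _ _
  have hsetle : ∫ x in {x | lam ≤ l x ∧ l x < 1}, (1 - η x) ∂μ ≤ ∫ x, (1 - η x) ∂μ := by
    apply setIntegral_le_integral h1int
    filter_upwards with x
    have := hη x
    simp only [Pi.zero_apply]
    linarith [this.2]
  have hbound : R lam - R 1 ≤ (1 - lam) / 2 := by
    rw [hk]
    calc ∫ x in {x | lam ≤ l x ∧ l x < 1}, (1 - 2 * η x) ∂μ
        ≤ (1 - lam) * ∫ x in {x | lam ≤ l x ∧ l x < 1}, (1 - η x) ∂μ := by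
          rw [← hconst]; exact hmono
      _ ≤ (1 - lam) * (1 / 2) := by
          apply mul_le_mul_of_nonneg_left _ (by linarith [hlam1])
          rw [← hbal]; exact hsetle
      _ = (1 - lam) / 2 := by ring
  -- algebra
  have hφhm1 : φhp = 1 - φhm := by linarith
  have hφsp1 : φsp = 1 - φsm := by linarith
  have hsmle : φsm ≤ φhm := by
    rw [hlam, div_le_one (by positivity)] at hlam1
    nlinarith [hlam1]
  have halg : (1 - lam) / 2 ≤ |φhm - φsm| / (2 * φsp * φsm) := by
    rw [abs_of_nonneg (by linarith), hlam]
    rw [div_le_div_iff₀ (by norm_num) (by positivity)]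
    have h1 : (1 - (φhp * φsm) / (φhm * φsp)) = (φhm - φsm) / (φhm * φsp) := by
      field_simp
      nlinarith [hφhm1, hφsp1]
    rw [h1, div_mul_eq_mul_div, div_le_iff₀ (by positivity)]
    nlinarith [mul_nonneg (mul_nonneg (sub_nonneg.mpr hsmle) (sub_nonneg.mpr hsmle)) hφsp.le]
  linarith [hinf, hbound, halg, hR1le 1 one_pos]
end

section
/- Let (X, 𝒜, μ) be a probability measure space and let η : X → ℝ be measurable with 0 < η x < 1 for all x; set l x = η x / (1 − η x). For t > 0 define R t = ∫_{{x : l x ≥ t}} (1 − η x) dμ + ∫_{{x : l x < t}} η x dμ. Then for every λ with 0 < λ ≤ 1: R λ − R 1 ≤ (1 − λ) · ∫ (1 − η x) dμ. In particular, if ∫ (1 − η x) dμ = 1/2, then R λ − R 1 ≤ (1 − λ)/2. -/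
open MeasureTheory

theorem stmt_12 {X : Type*} [MeasurableSpace X] (μ : Measure X) [IsProbabilityMeasure μ]
    (η : X → ℝ) (hηm : Measurable η) (hη : ∀ x, 0 < η x ∧ η x < 1)
    (l : X → ℝ) (hl : ∀ x, l x = η x / (1 - η x))
    (R : ℝ → ℝ)
    (hR : ∀ t, R t = (∫ x in {x | t ≤ l x}, (1 - η x) ∂μ) + ∫ x in {x | l x < t}, η x ∂μ) :
    ∀ lam : ℝ, 0 < lam → lam ≤ 1 →
      (R lam - R 1 ≤ (1 - lam) * ∫ x, (1 - η x) ∂μ) ∧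
      ((∫ x, (1 - η x) ∂μ) = 1 / 2 → R lam - R 1 ≤ (1 - lam) / 2) := by
  intro lam hlam hlam1
  have hlm : Measurable l := by
    have : l = fun x => η x / (1 - η x) := funext hl
    rw [this]; exact hηm.div (measurable_const.sub hηm)
  have hηi : Integrable η μ := by
    refine ⟨hηm.aestronglyMeasurable, ?_⟩
    refine (hasFiniteIntegral_const (1 : ℝ)).mono' ?_
    filter_upwards with x
    rw [Real.norm_eq_abs, abs_of_pos (hη x).1]
    · exact le_of_lt (hη x).2
  have h1ηi : Integrable (fun x => 1 - η x) μ := (integrable_const 1).sub hηi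
  -- sets
  set S : Set X := {x | lam ≤ l x ∧ l x < 1} with hS
  have hSm : MeasurableSet S := (measurableSet_le measurable_const hlm).inter
    (measurableSet_lt hlm measurable_const)
  have hA1m : MeasurableSet {x | (1:ℝ) ≤ l x} := measurableSet_le measurable_const hlm
  have hAlm : MeasurableSet {x | lam ≤ l x} := measurableSet_le measurable_const hlm
  have hBlm : MeasurableSet {x | l x < lam} := measurableSet_lt hlm measurable_const
  have hsub1 : {x | (1:ℝ) ≤ l x} ⊆ {x | lam ≤ l x} := fun x hx => le_trans hlam1 hx
  have hsub2 : {x | l x < lam} ⊆ {x | l x < (1:ℝ)} := fun x hx => lt_of_lt_of_le hx hlam1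
  have hdiff1 : {x | lam ≤ l x} \ {x | (1:ℝ) ≤ l x} = S := by
    ext x; simp [hS, Set.mem_diff, not_le, and_comm]
  have hdiff2 : {x | l x < (1:ℝ)} \ {x | l x < lam} = S := by
    ext x; simp [hS, Set.mem_diff, not_lt, and_comm]
  have e1 : (∫ x in {x | lam ≤ l x}, (1 - η x) ∂μ) - (∫ x in {x | (1:ℝ) ≤ l x}, (1 - η x) ∂μ)
      = ∫ x in S, (1 - η x) ∂μ := by
    rw [← hdiff1, integral_diff hA1m h1ηi.integrableOn hsub1]
  have e2 : (∫ x in {x | l x < lam}, η x ∂μ) - (∫ x in {x | l x < (1:ℝ)}, η x ∂μ)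
      = - ∫ x in S, η x ∂μ := by
    rw [← hdiff2, integral_diff hBlm hηi.integrableOn hsub2]
    ring
  have hkey : R lam - R 1 = ∫ x in S, (1 - η x - η x) ∂μ := by
    rw [hR lam, hR 1, integral_sub h1ηi.integrableOn hηi.integrableOn]
    have := e1
    have := e2
    linarith [e1, e2]
  -- pointwise bound on S
  have hpt : ∀ x ∈ S, 1 - η x - η x ≤ (1 - lam) * (1 - η x) := by
    intro x hx
    obtain ⟨hx1, _⟩ := hx
    have h1 : 0 < 1 - η x := by linarith [(hη x).2]
    rw [hl x, le_div_iff₀ h1] at hx1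
    nlinarith [(hη x).1]
  have hmono : ∫ x in S, (1 - η x - η x) ∂μ ≤ ∫ x in S, (1 - lam) * (1 - η x) ∂μ := by
    refine setIntegral_mono_on ?_ ?_ hSm hpt
    · exact (h1ηi.sub hηi).integrableOn
    · exact (h1ηi.const_mul _).integrableOn
  have hle : ∫ x in S, (1 - lam) * (1 - η x) ∂μ ≤ ∫ x, (1 - lam) * (1 - η x) ∂μ := by
    refine setIntegral_le_integral (h1ηi.const_mul _) ?_
    filter_upwards with x
    have h2 := (hη x).2
    have : (0:ℝ) ≤ 1 - lam := by linarith
    simp only [Pi.zero_apply]; nlinarith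
  have hfinal : R lam - R 1 ≤ (1 - lam) * ∫ x, (1 - η x) ∂μ := by
    rw [hkey, ← integral_const_mul]
    exact hmono.trans hle
  refine ⟨hfinal, fun h => ?_⟩
  rw [h] at hfinal
  linarith
end
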